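/- Let R be a commutative ring and n ≥ 2 an integer. Suppose f ∈ R[x,y] is a homogeneous polynomial of degree n satisfying f(x,y) = f(y,x) and the 2-cocycle condition f(y,z) − f(x+y,z) + f(x,y+z) − f(x,y) = 0 in R[x,y,z]. Then there is a unique element a ∈ R with f(x,y) = a·C_n(x,y). (Lazard's symmetric 2-cocycle lemma.) -/

import Mathlib

/-!
Write `f = Σ c_m x^m y^(n-m)`. Symmetry gives `c_(n-m) = c_m`; the coefficient of `x^i y^j z^k`
(`i, j, k > 0`) in the cocycle identity gives `C(i+j, i) c_(i+j) = C(n-i, j) c_i`, and that of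
`x^n` gives `c_n = c_0 = 0`. The coefficients `γ_m = C(n, m) / d_n` of `C_n` satisfy the same
relations, hence so do the cross differences `γ_i c_m - γ_m c_i`. By induction on `m ≤ n / 2`,
such a cross difference is killed by the integers `C(m, j)`, `C(n-m, j)` (`0 < j < m`) and
`C(n-i, m-i)`, and Lucas' theorem shows that no prime divides all of them, so it vanishes.
Finally `gcd_(0<m<n) C(n, m) = d_n`, so no prime divides every `γ_m`: a Bézout combination
`a = Σ μ_m c_m` satisfies `c_m = γ_m a`, and `a` is unique.
-/

noncomputable section

open MvPolynomial

/-- `d_n`: the prime `ℓ` if `n = ℓ^k` is a (positive) power of a prime, and `1`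
otherwise. -/
def dn (n : ℕ) : ℕ := if IsPrimePow n then n.minFac else 1

/-- The `n`-th symmetric 2-cocycle `C_n(x,y) = d_n⁻¹((x+y)^n − x^n − y^n)`, a
homogeneous polynomial of degree `n` with integer coefficients, written out via
the binomial theorem: `C_n(x,y) = Σ_{0 < k < n} (C(n,k)/d_n) x^k y^{n-k}`. -/
def Cpoly (n : ℕ) : MvPolynomial (Fin 2) ℤ :=
  ∑ k ∈ Finset.Ioo 0 n,
    monomial (Finsupp.single 0 k + Finsupp.single 1 (n - k))
      ((n.choose k : ℤ) / (dn n : ℤ))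

open Finset

theorem choose_pow_mul_add_modEq_one {q : ℕ} [Fact q.Prime] {b B : ℕ} (A : ℕ)
    (hB : B < q ^ b) :
    (q ^ b * A + B).choose B ≡ 1 [MOD q] := by
  induction b generalizing B with
  | zero =>
    obtain rfl : B = 0 := by simpa using hB
    rw [Nat.choose_zero_right]
  | succ b ih =>
    have hq : 0 < q := (Fact.out : q.Prime).pos
    have hmod : (q ^ (b + 1) * A + B) % q = B % q := by
      rw [pow_succ, mul_comm _ q, mul_assoc, Nat.mul_add_mod]
    have hdiv : (q ^ (b + 1) * A + B) / q = q ^ b * A + B / q := by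
      rw [pow_succ, mul_comm _ q, mul_assoc, Nat.mul_add_div hq]
    have hlucas := Choose.choose_modEq_choose_mod_mul_choose_div_nat
      (n := q ^ (b + 1) * A + B) (k := B) (p := q)
    rw [hmod, hdiv, Nat.choose_self, one_mul] at hlucas
    exact hlucas.trans (ih ((Nat.div_lt_iff_lt_mul hq).mpr (by rwa [← pow_succ])))

theorem Nat.Prime.not_dvd_choose_ordProj {q N : ℕ} (hq : q.Prime) (hN : N ≠ 0) :
    ¬ q ∣ N.choose (ordProj[q] N) := by
  have := Fact.mk hq
  have hlucas := Choose.choose_pow_mul_pow_mul_modEq_choose_nat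
    (p := q) (k := N.factorization q) (a := ordCompl[q] N) (b := 1)
  rw [mul_one, Nat.ordProj_mul_ordCompl_eq_self, Nat.choose_one_right] at hlucas
  exact fun h => Nat.not_dvd_ordCompl hq hN ((hlucas.dvd_iff dvd_rfl).mp h)

theorem Nat.Prime.not_dvd_choose_of_forall_dvd_choose {q n m i : ℕ} (hq : q.Prime)
    (hi : 0 < i) (him : i < m) (hmn : m ≤ n - m)
    (hm : ∀ j, 0 < j → j < m → q ∣ m.choose j)
    (hnm : ∀ j, 0 < j → j < m → q ∣ (n - m).choose j) :
    ¬ q ∣ (n - i).choose (m - i) := by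
  have hm_eq : ordProj[q] m = m := (Nat.ordProj_le q (by omega)).antisymm <| not_lt.mp
    fun hlt => hq.not_dvd_choose_ordProj (by omega) (hm _ (Nat.ordProj_pos m q) hlt)
  have hm_le : m ≤ ordProj[q] (n - m) := not_lt.mp
    fun hlt => hq.not_dvd_choose_ordProj (by omega) (hnm _ (Nat.ordProj_pos _ q) hlt)
  obtain ⟨t, ht⟩ : m ∣ n - m := by
    rw [← hm_eq] at hm_le ⊢
    exact (pow_dvd_pow q ((Nat.pow_le_pow_iff_right hq.one_lt).mp hm_le)).trans
      (Nat.ordProj_dvd _ q)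
  have := Fact.mk hq
  have hsum : n - i = ordProj[q] m * t + (m - i) := by rw [hm_eq, ← ht]; omega
  rw [hsum]
  exact fun h => hq.not_dvd_one <|
    ((choose_pow_mul_add_modEq_one t (by omega : m - i < ordProj[q] m)).dvd_iff dvd_rfl).mp h

theorem AddMonoid.eq_zero_of_forall_prime_exists_nsmul_eq_zero {G : Type*} [AddMonoid G] {x : G}
    (h : ∀ q : ℕ, q.Prime → ∃ k : ℕ, ¬ q ∣ k ∧ k • x = 0) : x = 0 := by
  by_contra hx
  obtain ⟨k, hk, hkx⟩ := h _ (Nat.minFac_prime (mt AddMonoid.addOrderOf_eq_one_iff.mp hx))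
  exact hk ((Nat.minFac_dvd _).trans (addOrderOf_dvd_of_nsmul_eq_zero hkx))

theorem Finset.exists_sum_mul_eq_one_of_forall_prime {ι : Type*} (s : Finset ι) (f : ι → ℤ)
    (h : ∀ q : ℕ, q.Prime → ∃ i ∈ s, ¬ (q : ℤ) ∣ f i) :
    ∃ μ : ι → ℤ, ∑ i ∈ s, f i * μ i = 1 := by
  obtain ⟨μ, hμ⟩ := s.gcd_eq_sum_mul f
  refine ⟨μ, hμ ▸ ?_⟩
  have habs : (s.gcd f).natAbs = 1 := by
    by_contra habs
    obtain ⟨i, hi, hndvd⟩ := h _ (Nat.minFac_prime habs)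
    exact hndvd ((Int.natCast_dvd.mpr (Nat.minFac_dvd _)).trans (s.gcd_dvd hi))
  have := Int.nonneg_of_normalize_eq_self (s.normalize_gcd (f := f))
  omega

theorem dn_pos (n : ℕ) : 0 < dn n := by
  unfold dn
  split_ifs
  exacts [Nat.minFac_pos n, one_pos]

theorem dn_eq_gcd_choose {n : ℕ} (hn : 1 < n) : dn n = (Icc 1 (n - 1)).gcd n.choose := by
  unfold dn
  split_ifs with h
  · exact (Choose.gcd_choose_eq_minFac_of_isPrimePow h).symm
  · exact (Choose.gcd_choose_eq_one_of_not_isPrimePow hn h).symm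

theorem dn_dvd_choose {n k : ℕ} (hk : k ∈ Ioo 0 n) : dn n ∣ n.choose k := by
  rw [mem_Ioo] at hk
  rw [dn_eq_gcd_choose (by omega)]
  exact gcd_dvd (mem_Icc.mpr ⟨hk.1, by omega⟩)

def lazardCoeff (n k : ℕ) : ℕ := n.choose k / dn n

theorem exists_not_dvd_lazardCoeff {n q : ℕ} (hn : 1 < n) (hq : q.Prime) :
    ∃ k ∈ Ioo 0 n, ¬ q ∣ lazardCoeff n k := by
  by_contra! h
  have hdvd : q * dn n ∣ dn n := by
    conv_rhs => rw [dn_eq_gcd_choose hn]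
    refine dvd_gcd fun k hk => ?_
    have hk' : k ∈ Ioo 0 n := by rw [mem_Icc] at hk; rw [mem_Ioo]; omega
    rw [← Nat.div_mul_cancel (dn_dvd_choose hk')]
    exact mul_dvd_mul_right (h k hk') _
  exact hq.not_dvd_one (Nat.dvd_of_mul_dvd_mul_right (dn_pos n) (by simpa using hdvd))

theorem exists_sum_lazardCoeff_mul_eq_one {n : ℕ} (hn : 1 < n) :
    ∃ μ : ℕ → ℤ, ∑ k ∈ Ioo 0 n, (lazardCoeff n k : ℤ) * μ k = 1 :=
  (Ioo 0 n).exists_sum_mul_eq_one_of_forall_prime _ fun q hq => by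
    simpa [Int.natCast_dvd_natCast] using exists_not_dvd_lazardCoeff hn hq

/-- `c m` plays the role of the coefficient of `x^m y^(n-m)` in a symmetric 2-cocycle, and
`choose_smul i m` is the vanishing of the coefficient of `x^i y^(m-i) z^(n-m)` in the cocycle
identity. -/
structure IsSymmCocycleCoeffs {M : Type*} [AddCommMonoid M] (n : ℕ) (c : ℕ → M) : Prop where
  symm : ∀ m ≤ n, c (n - m) = c m
  choose_smul : ∀ i m, 0 < i → i < m → m < n →
    m.choose i • c m = (n - i).choose (m - i) • c i

theorem isSymmCocycleCoeffs_lazardCoeff (n : ℕ) : IsSymmCocycleCoeffs n (lazardCoeff n) where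
  symm m hm := by rw [lazardCoeff, lazardCoeff, Nat.choose_symm hm]
  choose_smul i m hi him hmn := by
    simp only [lazardCoeff, smul_eq_mul]
    rw [← Nat.mul_div_assoc _ (dn_dvd_choose (mem_Ioo.mpr ⟨by omega, hmn⟩)),
      ← Nat.mul_div_assoc _ (dn_dvd_choose (mem_Ioo.mpr ⟨hi, by omega⟩)),
      mul_comm, Nat.choose_mul him.le, mul_comm]

section CrossDiff

variable {M : Type*} [AddCommGroup M] {n : ℕ} {a : ℕ → ℕ} {c : ℕ → M}

def crossDiff (a : ℕ → ℕ) (c : ℕ → M) (i m : ℕ) : M := a i • c m - a m • c i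

theorem crossDiff_swap (i m : ℕ) : crossDiff a c m i = -crossDiff a c i m := by
  simp [crossDiff]

theorem crossDiff_self (i : ℕ) : crossDiff a c i i = 0 := sub_self _

theorem crossDiff_sub_right (ha : IsSymmCocycleCoeffs n a) (hc : IsSymmCocycleCoeffs n c)
    (i : ℕ) {m : ℕ} (hm : m ≤ n) : crossDiff a c i (n - m) = crossDiff a c i m := by
  simp only [crossDiff, ha.symm m hm, hc.symm m hm]

theorem crossDiff_sub_left (ha : IsSymmCocycleCoeffs n a) (hc : IsSymmCocycleCoeffs n c)
    {i : ℕ} (m : ℕ) (hi : i ≤ n) : crossDiff a c (n - i) m = crossDiff a c i m := by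
  rw [crossDiff_swap, crossDiff_sub_right ha hc m hi, ← crossDiff_swap]

theorem choose_smul_crossDiff (ha : IsSymmCocycleCoeffs n a) (hc : IsSymmCocycleCoeffs n c)
    (k : ℕ) {j m : ℕ} (hj : 0 < j) (hjm : j < m) (hmn : m < n) :
    m.choose j • crossDiff a c k m = (n - j).choose (m - j) • crossDiff a c k j := by
  have hca : m.choose j * a m = (n - j).choose (m - j) * a j := ha.choose_smul j m hj hjm hmn
  simp only [crossDiff, smul_sub, smul_comm _ (a k), hc.choose_smul j m hj hjm hmn, smul_smul,
    hca]

theorem choose_smul_crossDiff_eq_zero (ha : IsSymmCocycleCoeffs n a)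
    (hc : IsSymmCocycleCoeffs n c) {i m : ℕ} (hi : 0 < i) (him : i < m) (hmn : m < n) :
    (n - i).choose (m - i) • crossDiff a c i m = 0 := by
  have h := choose_smul_crossDiff ha hc (n - m) (j := n - m) (m := n - i)
    (by omega) (by omega) (by omega)
  rwa [crossDiff_self, smul_zero, crossDiff_sub_left ha hc _ hmn.le,
    crossDiff_sub_right ha hc _ (by omega), crossDiff_swap, smul_neg, neg_eq_zero,
    Nat.choose_symm_of_eq_add (by omega : n - i = (n - m) + (m - i))] at h

theorem crossDiff_eq_zero_of_lt_of_le_sub (ha : IsSymmCocycleCoeffs n a)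
    (hc : IsSymmCocycleCoeffs n c) {i m : ℕ} (hi : 0 < i) (him : i < m) (hmn : m ≤ n - m) :
    crossDiff a c i m = 0 := by
  induction m using Nat.strong_induction_on generalizing i with
  | _ m ih =>
  have hprev : ∀ j k, 0 < j → j < m → 0 < k → k < m → crossDiff a c j k = 0 := by
    intro j k hj hjm hk hkm
    rcases lt_trichotomy j k with hjk | rfl | hkj
    · exact ih k hkm hj hjk (by omega)
    · exact crossDiff_self j
    · rw [crossDiff_swap, ih j hjm hk hkj (by omega), neg_zero]
  refine AddMonoid.eq_zero_of_forall_prime_exists_nsmul_eq_zero fun q hq => ?_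
  by_cases hm : ∃ j, 0 < j ∧ j < m ∧ ¬ q ∣ m.choose j
  · obtain ⟨j, hj, hjm, hndvd⟩ := hm
    refine ⟨_, hndvd, ?_⟩
    rw [choose_smul_crossDiff ha hc i hj hjm (by omega), hprev i j hi him hj hjm, smul_zero]
  by_cases hnm : ∃ j, 0 < j ∧ j < m ∧ ¬ q ∣ (n - m).choose j
  · obtain ⟨j, hj, hjm, hndvd⟩ := hnm
    refine ⟨_, hndvd, ?_⟩
    rw [← crossDiff_sub_right ha hc i (by omega : m ≤ n),
      choose_smul_crossDiff ha hc i hj (by omega) (by omega), hprev i j hi him hj hjm, smul_zero]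
  push Not at hm hnm
  exact ⟨_, hq.not_dvd_choose_of_forall_dvd_choose hi him hmn hm hnm,
    choose_smul_crossDiff_eq_zero ha hc hi him (by omega)⟩

theorem crossDiff_eq_zero (ha : IsSymmCocycleCoeffs n a) (hc : IsSymmCocycleCoeffs n c)
    {i m : ℕ} (hi : i ∈ Ioo 0 n) (hm : m ∈ Ioo 0 n) : crossDiff a c i m = 0 := by
  suffices h : ∀ i m, 0 < i → i ≤ n - i → 0 < m → m ≤ n - m → crossDiff a c i m = 0 by
    rw [mem_Ioo] at hi hm
    rcases le_total i (n - i) with hi' | hi' <;> rcases le_total m (n - m) with hm' | hm'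
    · exact h i m hi.1 hi' hm.1 hm'
    · rw [← crossDiff_sub_right ha hc i hm.2.le]
      exact h _ _ hi.1 hi' (by omega) (by omega)
    · rw [← crossDiff_sub_left ha hc m hi.2.le]
      exact h _ _ (by omega) (by omega) hm.1 hm'
    · rw [← crossDiff_sub_right ha hc i hm.2.le, ← crossDiff_sub_left ha hc _ hi.2.le]
      exact h _ _ (by omega) (by omega) (by omega) (by omega)
  intro i m hi hin hm hmn
  rcases lt_trichotomy i m with him | rfl | hmi
  · exact crossDiff_eq_zero_of_lt_of_le_sub ha hc hi him hmn
  · exact crossDiff_self i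
  · rw [crossDiff_swap, crossDiff_eq_zero_of_lt_of_le_sub ha hc hm hmi hin, neg_zero]

end CrossDiff

theorem IsSymmCocycleCoeffs.existsUnique_eq_lazardCoeff_smul {M : Type*} [AddCommGroup M]
    {n : ℕ} {c : ℕ → M} (hc : IsSymmCocycleCoeffs n c) (hn : 1 < n) :
    ∃! x : M, ∀ m ∈ Ioo 0 n, c m = lazardCoeff n m • x := by
  obtain ⟨μ, hμ⟩ := exists_sum_lazardCoeff_mul_eq_one hn
  have hx (m : ℕ) (hm : m ∈ Ioo 0 n) : c m = lazardCoeff n m • ∑ k ∈ Ioo 0 n, μ k • c k :=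
    calc c m = (∑ k ∈ Ioo 0 n, (lazardCoeff n k : ℤ) * μ k) • c m := by rw [hμ, one_smul]
      _ = ∑ k ∈ Ioo 0 n, μ k • lazardCoeff n k • c m := by
        simp only [sum_smul, mul_comm _ (μ _), mul_smul, natCast_zsmul]
      _ = ∑ k ∈ Ioo 0 n, μ k • lazardCoeff n m • c k := sum_congr rfl fun k hk => by
        rw [sub_eq_zero.mp (crossDiff_eq_zero (isSymmCocycleCoeffs_lazardCoeff n) hc hk hm)]
      _ = lazardCoeff n m • ∑ k ∈ Ioo 0 n, μ k • c k := by
        simp only [smul_sum, smul_comm (μ _)]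
  refine ⟨_, hx, fun y hy => sub_eq_zero.mp ?_⟩
  refine AddMonoid.eq_zero_of_forall_prime_exists_nsmul_eq_zero fun q hq => ?_
  obtain ⟨k, hk, hndvd⟩ := exists_not_dvd_lazardCoeff hn hq
  exact ⟨_, hndvd, by rw [smul_sub, ← hy k hk, ← hx k hk, sub_self]⟩

def bideg (a b : ℕ) : Fin 2 →₀ ℕ := Finsupp.single 0 a + Finsupp.single 1 b

def trideg (a b c : ℕ) : Fin 3 →₀ ℕ :=
  Finsupp.single 0 a + Finsupp.single 1 b + Finsupp.single 2 c

theorem eq_bideg (d : Fin 2 →₀ ℕ) : d = bideg (d 0) (d 1) := by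
  ext i; fin_cases i <;> simp [bideg]

theorem bideg_inj {a b a' b' : ℕ} : bideg a b = bideg a' b' ↔ a = a' ∧ b = b' := by
  refine ⟨fun h => ⟨?_, ?_⟩, fun h => h.1 ▸ h.2 ▸ rfl⟩
  · simpa [bideg] using DFunLike.congr_fun h 0
  · simpa [bideg] using DFunLike.congr_fun h 1

theorem trideg_inj {a b c a' b' c' : ℕ} :
    trideg a b c = trideg a' b' c' ↔ a = a' ∧ b = b' ∧ c = c' := by
  refine ⟨fun h => ⟨?_, ?_, ?_⟩, fun h => h.1 ▸ h.2.1 ▸ h.2.2 ▸ rfl⟩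
  · simpa [trideg] using DFunLike.congr_fun h 0
  · simpa [trideg] using DFunLike.congr_fun h 1
  · simpa [trideg] using DFunLike.congr_fun h 2

theorem degree_bideg (a b : ℕ) : (bideg a b).degree = a + b := by
  simp [Finsupp.degree_eq_sum, Fin.sum_univ_two, bideg]

section Substitution

variable {R : Type*} [CommSemiring R]

theorem aeval_monomial_bideg (g : Fin 2 → MvPolynomial (Fin 3) R) (a b : ℕ) (r : R) :
    aeval g (monomial (bideg a b) r) = C r * (g 0 ^ a * g 1 ^ b) := by
  rw [aeval_monomial, Finsupp.prod_fintype _ _ (fun _ => pow_zero _), Fin.prod_univ_two]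
  simp [bideg, algebraMap_eq]

theorem coeff_trideg_C_mul_X_pow (r : R) (i j k a b c : ℕ) :
    coeff (trideg i j k) (C r * (X 0 ^ a * X 1 ^ b * X 2 ^ c)) =
      if a = i ∧ b = j ∧ c = k then r else 0 := by
  have hmon : C r * (X 0 ^ a * X 1 ^ b * X 2 ^ c) = monomial (trideg a b c) r := by
    simp only [X_pow_eq_monomial, monomial_mul, C_mul_monomial, mul_one, trideg]
  simp only [hmon, coeff_monomial, trideg_inj, eq_comm]

theorem coeff_trideg_aeval_X_one_X_two (p : MvPolynomial (Fin 2) R) (i j k : ℕ) :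
    coeff (trideg i j k) (aeval ![X 1, X 2] p) = if i = 0 then coeff (bideg j k) p else 0 := by
  induction p using MvPolynomial.induction_on' with
  | add p q hp hq => simp only [map_add, coeff_add, hp, hq]; split_ifs <;> simp
  | monomial d r =>
    have h := coeff_trideg_C_mul_X_pow r i j k 0 (d 0) (d 1)
    rw [pow_zero, one_mul] at h
    rw [eq_bideg d, aeval_monomial_bideg]
    simp only [Matrix.cons_val_zero, Matrix.cons_val_one, h, coeff_monomial, bideg_inj]
    grind

theorem coeff_trideg_aeval_X_zero_X_one (p : MvPolynomial (Fin 2) R) (i j k : ℕ) :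
    coeff (trideg i j k) (aeval ![X 0, X 1] p) = if k = 0 then coeff (bideg i j) p else 0 := by
  induction p using MvPolynomial.induction_on' with
  | add p q hp hq => simp only [map_add, coeff_add, hp, hq]; split_ifs <;> simp
  | monomial d r =>
    have h := coeff_trideg_C_mul_X_pow r i j k (d 0) (d 1) 0
    rw [pow_zero, mul_one] at h
    rw [eq_bideg d, aeval_monomial_bideg]
    simp only [Matrix.cons_val_zero, Matrix.cons_val_one, h, coeff_monomial, bideg_inj]
    grind

theorem coeff_trideg_C_mul_add_pow_mul_pow (r : R) (i j k a b : ℕ) :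
    coeff (trideg i j k) (C r * ((X 0 + X 1) ^ a * X 2 ^ b)) =
      if a = i + j ∧ b = k then a.choose i * r else 0 := by
  have hterm : ∀ l, C r * (X 0 ^ l * X 1 ^ (a - l) * (a.choose l : MvPolynomial (Fin 3) R) *
      X 2 ^ b) = C (a.choose l * r) * (X 0 ^ l * X 1 ^ (a - l) * X 2 ^ b) := fun l => by
    rw [C_mul, ← map_natCast C]; ring
  simp only [add_pow, sum_mul, mul_sum, coeff_sum, hterm, coeff_trideg_C_mul_X_pow, ite_and,
    sum_ite_eq', mem_range]
  grind

theorem coeff_trideg_C_mul_pow_mul_add_pow (r : R) (i j k a b : ℕ) :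
    coeff (trideg i j k) (C r * (X 0 ^ a * (X 1 + X 2) ^ b)) =
      if a = i ∧ b = j + k then b.choose j * r else 0 := by
  have hterm : ∀ l, C r * (X 0 ^ a * (X 1 ^ l * X 2 ^ (b - l) *
      (b.choose l : MvPolynomial (Fin 3) R))) =
      C (b.choose l * r) * (X 0 ^ a * X 1 ^ l * X 2 ^ (b - l)) := fun l => by
    rw [C_mul, ← map_natCast C]; ring
  simp only [add_pow, mul_sum, coeff_sum, hterm, coeff_trideg_C_mul_X_pow, ite_and,
    sum_ite_irrel, sum_ite_eq', mem_range, sum_const_zero]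
  grind

theorem coeff_trideg_aeval_add_X (p : MvPolynomial (Fin 2) R) (i j k : ℕ) :
    coeff (trideg i j k) (aeval ![X 0 + X 1, X 2] p) =
      (i + j).choose i * coeff (bideg (i + j) k) p := by
  induction p using MvPolynomial.induction_on' with
  | add p q hp hq => simp only [map_add, coeff_add, hp, hq, mul_add]
  | monomial d r =>
    rw [eq_bideg d, aeval_monomial_bideg]
    simp only [Matrix.cons_val_zero, Matrix.cons_val_one, coeff_trideg_C_mul_add_pow_mul_pow,
      coeff_monomial, bideg_inj]
    grind

theorem coeff_trideg_aeval_X_add (p : MvPolynomial (Fin 2) R) (i j k : ℕ) :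
    coeff (trideg i j k) (aeval ![X 0, X 1 + X 2] p) =
      (j + k).choose j * coeff (bideg i (j + k)) p := by
  induction p using MvPolynomial.induction_on' with
  | add p q hp hq => simp only [map_add, coeff_add, hp, hq, mul_add]
  | monomial d r =>
    rw [eq_bideg d, aeval_monomial_bideg]
    simp only [Matrix.cons_val_zero, Matrix.cons_val_one, coeff_trideg_C_mul_pow_mul_add_pow,
      coeff_monomial, bideg_inj]
    grind

end Substitution

section Cocycle

variable {R : Type*} [CommRing R]

def coboundary (f : MvPolynomial (Fin 2) R) : MvPolynomial (Fin 3) R :=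
  aeval ![X 1, X 2] f - aeval ![X 0 + X 1, X 2] f + aeval ![X 0, X 1 + X 2] f -
    aeval ![X 0, X 1] f

theorem coeff_trideg_coboundary (f : MvPolynomial (Fin 2) R) (i j k : ℕ) :
    coeff (trideg i j k) (coboundary f) =
      (if i = 0 then coeff (bideg j k) f else 0) -
        (i + j).choose i * coeff (bideg (i + j) k) f +
        (j + k).choose j * coeff (bideg i (j + k)) f -
        (if k = 0 then coeff (bideg i j) f else 0) := by
  simp only [coboundary, coeff_sub, coeff_add, coeff_trideg_aeval_X_one_X_two,
    coeff_trideg_aeval_add_X, coeff_trideg_aeval_X_add, coeff_trideg_aeval_X_zero_X_one]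

theorem coeff_bideg_zero_right_of_coboundary_eq_zero {f : MvPolynomial (Fin 2) R}
    (hf : coboundary f = 0) {a : ℕ} (ha : a ≠ 0) : coeff (bideg a 0) f = 0 := by
  have h := coeff_trideg_coboundary f a 0 0
  simpa [ha, hf] using h

theorem coeff_bideg_comm {f : MvPolynomial (Fin 2) R} (hf : rename (Equiv.swap 0 1) f = f)
    (a b : ℕ) : coeff (bideg a b) f = coeff (bideg b a) f := by
  have h := coeff_rename_mapDomain (Equiv.swap (0 : Fin 2) 1) (Equiv.injective _) f (bideg b a)
  rwa [hf, bideg, Finsupp.mapDomain_add, Finsupp.mapDomain_single, Finsupp.mapDomain_single,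
    Equiv.swap_apply_left, Equiv.swap_apply_right, add_comm, ← bideg] at h

theorem isSymmCocycleCoeffs_coeff {f : MvPolynomial (Fin 2) R}
    (hsymm : rename (Equiv.swap 0 1) f = f) (hf : coboundary f = 0) (n : ℕ) :
    IsSymmCocycleCoeffs n fun m => coeff (bideg m (n - m)) f where
  symm m hm := by
    rw [coeff_bideg_comm hsymm, Nat.sub_sub_self hm]
  choose_smul i m hi him hmn := by
    have h := coeff_trideg_coboundary f i (m - i) (n - m)
    rw [hf, coeff_zero, if_neg hi.ne', if_neg (by omega), Nat.add_sub_cancel' him.le,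
      show m - i + (n - m) = n - i by omega] at h
    simp only [nsmul_eq_mul]
    linear_combination h

theorem MvPolynomial.IsHomogeneous.eq_of_coeff_bideg_eq {S : Type*} [CommSemiring S] {n : ℕ}
    {p q : MvPolynomial (Fin 2) S} (hp : p.IsHomogeneous n) (hq : q.IsHomogeneous n)
    (h : ∀ m ≤ n, coeff (bideg m (n - m)) p = coeff (bideg m (n - m)) q) : p = q := by
  ext d
  rw [eq_bideg d]
  by_cases hd : d 0 + d 1 = n
  · rw [show d 1 = n - d 0 by omega]
    exact h _ (by omega)
  · rw [hp.coeff_eq_zero (by rwa [degree_bideg]), hq.coeff_eq_zero (by rwa [degree_bideg])]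

theorem map_Cpoly (n : ℕ) : map (Int.castRingHom R) (Cpoly n) =
    ∑ k ∈ Ioo 0 n, monomial (bideg k (n - k)) (lazardCoeff n k : R) := by
  simp only [Cpoly, map_sum, map_monomial, lazardCoeff, bideg, eq_intCast, ← Int.natCast_div,
    Int.cast_natCast]

theorem isHomogeneous_map_Cpoly (n : ℕ) :
    (map (Int.castRingHom R) (Cpoly n)).IsHomogeneous n := by
  rw [map_Cpoly]
  refine IsHomogeneous.sum _ _ _ fun k hk => isHomogeneous_monomial _ ?_
  rw [degree_bideg]
  have := (mem_Ioo.mp hk).2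
  omega

theorem coeff_bideg_map_Cpoly (n m : ℕ) :
    coeff (bideg m (n - m)) (map (Int.castRingHom R) (Cpoly n)) =
      if m ∈ Ioo 0 n then (lazardCoeff n m : R) else 0 := by
  simp [map_Cpoly, coeff_sum, coeff_monomial, bideg_inj, ite_and]

theorem eq_C_mul_map_Cpoly_iff {n : ℕ} {f : MvPolynomial (Fin 2) R} (hf : f.IsHomogeneous n)
    (hf0 : coeff (bideg 0 n) f = 0) (hfn : coeff (bideg n 0) f = 0) (a : R) :
    f = C a * map (Int.castRingHom R) (Cpoly n) ↔
      ∀ m ∈ Ioo 0 n, coeff (bideg m (n - m)) f = lazardCoeff n m • a := by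
  constructor
  · rintro rfl m hm
    rw [coeff_C_mul, coeff_bideg_map_Cpoly, if_pos hm, nsmul_eq_mul, mul_comm]
  · refine fun h => hf.eq_of_coeff_bideg_eq ((isHomogeneous_map_Cpoly n).C_mul a) fun m hm => ?_
    rw [coeff_C_mul, coeff_bideg_map_Cpoly]
    split_ifs with hm'
    · rw [h m hm', nsmul_eq_mul, mul_comm]
    · obtain rfl | rfl : m = 0 ∨ m = n := by rw [mem_Ioo] at hm'; omega
      · simpa using hf0
      · simpa using hfn

end Cocycle

/-- **Lazard's symmetric 2-cocycle lemma.** A homogeneous symmetric polynomial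
2-cocycle of degree `n ≥ 2` over a commutative ring `R` is a unique `R`-multiple
of `C_n`. -/
theorem symmetric_two_cocycle_lemma (R : Type*) [CommRing R] (n : ℕ) (hn : 2 ≤ n)
    (f : MvPolynomial (Fin 2) R)
    (hhom : f.IsHomogeneous n)
    (hsymm : rename (Equiv.swap (0 : Fin 2) 1) f = f)
    (hcocycle :
      aeval ![(X 1 : MvPolynomial (Fin 3) R), X 2] f -
        aeval ![X 0 + X 1, X 2] f +
        aeval ![X 0, X 1 + X 2] f -
        aeval ![X 0, X 1] f = 0) :
    ∃! a : R, f = C a * map (Int.castRingHom R) (Cpoly n) := by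
  have hfn : coeff (bideg n 0) f = 0 :=
    coeff_bideg_zero_right_of_coboundary_eq_zero hcocycle (by omega)
  have hf0 : coeff (bideg 0 n) f = 0 := by rwa [coeff_bideg_comm hsymm]
  exact (existsUnique_congr (eq_C_mul_map_Cpoly_iff hhom hf0 hfn)).mpr
    ((isSymmCocycleCoeffs_coeff hsymm hcocycle n).existsUnique_eq_lazardCoeff_smul (by omega))
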